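/- Let v∞ > 0 and define h(v) = v ln(v/v∞) − (v − v∞) for v > 0. Let Ω₂ = {v : v∞/2 ≤ v ≤ 3v∞/2}. Then sup_{v ∈ Ω₂, v ≠ v∞} |v − v∞|² / h(v) = v∞/(6 ln(3/2) − 2); in particular, for every v ∈ Ω₂: |v − v∞|² ≤ v∞ · h(v)/(6 ln(3/2) − 2). -/

import Mathlib

/-!
Writing `v = v∞ t`, one has `h(v) = v∞ φ(t)` with `φ(t) = t ln t + 1 − t`, so the claim is that
`φ(t) / (t − 1)²` is minimal on `(0, 3/2]` at `t = 3/2`, where it equals `4 φ(3/2) = 6 ln(3/2) − 2`.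
For `t ≤ 1` this follows from `φ(t) ≥ (t − 1)²/2` and `4 φ(3/2) < 1/2`. For `1 ≤ t ≤ b`, the
difference `f(t) = φ(t) − φ(b) (t − 1)²/(b − 1)²` vanishes at `1` and `b`, and so does `f'` at `1`;
since `f'(t) = ln t − 2 φ(b) (t − 1)/(b − 1)²` is concave, it is first nonnegative and then negative,
so `f` rises and then falls and stays nonnegative between its zeros.
-/

/-- The relative entropy function `h(v) = v ln(v/v∞) − (v − v∞)`. -/
noncomputable def relEnt (vinf v : ℝ) : ℝ := v * Real.log (v / vinf) - (v - vinf)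

open Real Set InformationTheory

lemma nonneg_of_hasDerivAt_of_concaveOn_deriv {f f' : ℝ → ℝ} {a b : ℝ}
    (hf : ∀ x ∈ Icc a b, HasDerivAt f (f' x) x) (hf' : ConcaveOn ℝ (Icc a b) f')
    (ha : 0 ≤ f a) (hb : 0 ≤ f b) (ha' : 0 ≤ f' a) {x : ℝ} (hx : x ∈ Icc a b) : 0 ≤ f x := by
  have hab : a ≤ b := hx.1.trans hx.2
  have hcont : ContinuousOn f (Icc a b) := fun y hy => (hf y hy).continuousAt.continuousWithinAt
  have hderiv {c d : ℝ} (hcd : Icc c d ⊆ Icc a b) (y : ℝ) (hy : y ∈ interior (Icc c d)) :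
      HasDerivWithinAt f (f' y) (interior (Icc c d)) y :=
    (hf y (hcd (interior_subset hy))).hasDerivWithinAt
  rcases le_or_gt 0 (f' x) with hx' | hx'
  · have hsub : Icc a x ⊆ Icc a b := Icc_subset_Icc le_rfl hx.2
    have hmono : MonotoneOn f (Icc a x) :=
      monotoneOn_of_hasDerivWithinAt_nonneg (convex_Icc a x) (hcont.mono hsub) (hderiv hsub)
        fun y hy => (le_min ha' hx').trans <|
          hf'.min_le_of_mem_Icc (left_mem_Icc.2 hab) hx (interior_subset hy)
    exact ha.trans (hmono (left_mem_Icc.2 hx.1) (right_mem_Icc.2 hx.1) hx.1)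
  · have hsub : Icc x b ⊆ Icc a b := Icc_subset_Icc hx.1 le_rfl
    have hanti : AntitoneOn f (Icc x b) := by
      refine antitoneOn_of_hasDerivWithinAt_nonpos (convex_Icc x b) (hcont.mono hsub)
        (hderiv hsub) fun y hy => ?_
      have hy' : y ∈ Icc a b := hsub (interior_subset hy)
      have hmin := hf'.min_le_of_mem_Icc (left_mem_Icc.2 hab) hy' ⟨hx.1, (interior_subset hy).1⟩
      rcases min_le_iff.1 hmin with h | h <;> linarith
    exact hb.trans (hanti (left_mem_Icc.2 hx.2) (right_mem_Icc.2 hx.2) hx.2)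

lemma sq_sub_one_div_two_le_klFun {t : ℝ} (ht₀ : 0 < t) (ht₁ : t ≤ 1) :
    (t - 1) ^ 2 / 2 ≤ klFun t := by
  set g : ℝ → ℝ := fun s => klFun s - (s - 1) ^ 2 / 2
  have hg (s : ℝ) (hs : s ≠ 0) : HasDerivAt g (log s - (s - 1)) s := by
    refine ((hasDerivAt_klFun hs).fun_sub
      ((((hasDerivAt_id s).sub_const 1).fun_pow 2).div_const 2)).congr_deriv ?_
    simp only [id, Nat.cast_ofNat]
    ring
  have hanti : AntitoneOn g (Icc t 1) :=
    antitoneOn_of_hasDerivWithinAt_nonpos (convex_Icc t 1)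
      (fun s hs => (hg s (ht₀.trans_le hs.1).ne').continuousAt.continuousWithinAt)
      (fun s hs => (hg s (ht₀.trans_le (interior_subset hs).1).ne').hasDerivWithinAt)
      fun s hs => by
        have := log_le_sub_one_of_pos (ht₀.trans_le (interior_subset hs).1)
        linarith
  have := hanti (left_mem_Icc.2 ht₁) (right_mem_Icc.2 ht₁) ht₁
  simp only [g, klFun_one] at this
  linarith

lemma klFun_div_sq_mul_sq_le_klFun {b t : ℝ} (hb : 1 < b) (ht : t ∈ Icc 1 b) :
    klFun b / (b - 1) ^ 2 * (t - 1) ^ 2 ≤ klFun t := by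
  set K := klFun b / (b - 1) ^ 2
  have hpos : Icc 1 b ⊆ Ioi 0 := fun s hs => zero_lt_one.trans_le hs.1
  have hconvex : ConvexOn ℝ (Icc 1 b) fun s => 2 * K * (s - 1) :=
    ⟨convex_Icc 1 b, fun x _ y _ u v _ _ huv =>
      le_of_eq (by simp only [smul_eq_mul]; linear_combination (2 * K) * huv)⟩
  have hf (s : ℝ) (hs : s ∈ Icc 1 b) :
      HasDerivAt (fun s => klFun s - K * (s - 1) ^ 2) (log s - 2 * K * (s - 1)) s := by
    refine ((hasDerivAt_klFun (hpos hs).ne').fun_sub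
      ((((hasDerivAt_id s).sub_const 1).fun_pow 2).const_mul K)).congr_deriv ?_
    simp only [id, Nat.cast_ofNat]
    ring
  have hK : K * (b - 1) ^ 2 = klFun b := div_mul_cancel₀ _ (by nlinarith)
  have := nonneg_of_hasDerivAt_of_concaveOn_deriv hf
    ((strictConcaveOn_log_Ioi.concaveOn.subset hpos (convex_Icc 1 b)).sub hconvex)
    (by simp [klFun_one]) (by simp [hK]) (by simp) ht
  linarith

lemma four_mul_klFun_three_halves_lt : 4 * klFun (3 / 2) < 1 / 2 := by
  have hlog : log (3 / 2) < 5 / 12 := by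
    rw [log_lt_iff_lt_exp (by norm_num)]
    linarith [quadratic_le_exp_of_nonneg (by norm_num : (0 : ℝ) ≤ 5 / 12)]
  rw [klFun_apply]
  linarith

lemma four_mul_klFun_three_halves_mul_sq_le_klFun {t : ℝ} (ht₀ : 0 < t) (ht : t ≤ 3 / 2) :
    4 * klFun (3 / 2) * (t - 1) ^ 2 ≤ klFun t := by
  rcases le_total t 1 with ht₁ | ht₁
  · have := sq_sub_one_div_two_le_klFun ht₀ ht₁
    nlinarith [four_mul_klFun_three_halves_lt, sq_nonneg (t - 1)]
  · have := klFun_div_sq_mul_sq_le_klFun (by norm_num : (1 : ℝ) < 3 / 2) ⟨ht₁, ht⟩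
    norm_num at this
    linarith

lemma klFun_pos {t : ℝ} (ht : 0 ≤ t) (hne : t ≠ 1) : 0 < klFun t :=
  (klFun_nonneg ht).lt_of_ne (Ne.symm ((klFun_eq_zero_iff ht).not.2 hne))

lemma relEnt_eq_mul_klFun {vinf : ℝ} (hvinf : vinf ≠ 0) (v : ℝ) :
    relEnt vinf v = vinf * klFun (v / vinf) := by
  rw [relEnt, klFun_apply]
  field_simp
  ring

lemma relEnt_pos {vinf v : ℝ} (hvinf : 0 < vinf) (hv : 0 < v) (hne : v ≠ vinf) :
    0 < relEnt vinf v := by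
  rw [relEnt_eq_mul_klFun hvinf.ne']
  exact mul_pos hvinf (klFun_pos (by positivity) (by rwa [Ne, div_eq_one_iff_eq hvinf.ne']))

lemma sq_abs_sub_mul_le_mul_relEnt {vinf v : ℝ} (hvinf : 0 < vinf) (hv₀ : 0 < v)
    (hv : v ≤ 3 * vinf / 2) :
    |v - vinf| ^ 2 * (4 * klFun (3 / 2)) ≤ vinf * relEnt vinf v := by
  have ht := four_mul_klFun_three_halves_mul_sq_le_klFun (t := v / vinf) (by positivity)
    (by rw [div_le_iff₀ hvinf]; linarith)
  have hsq : |v - vinf| ^ 2 = vinf ^ 2 * (v / vinf - 1) ^ 2 := by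
    rw [sq_abs]; field_simp
  rw [relEnt_eq_mul_klFun hvinf.ne', hsq]
  nlinarith [sq_nonneg vinf]

/-- bound (2.10): on `Ω₂ = {v∞/2 ≤ v ≤ 3v∞/2}`,
`sup_{v ≠ v∞} |v − v∞|² / h(v) = v∞/(6 ln(3/2) − 2)`; in particular
`|v − v∞|² ≤ v∞ h(v)/(6 ln(3/2) − 2)` for every `v ∈ Ω₂`. -/
theorem statement17 (vinf : ℝ) (hvinf : 0 < vinf) :
    sSup ((fun v => |v - vinf| ^ 2 / relEnt vinf v) ''
        {v : ℝ | vinf / 2 ≤ v ∧ v ≤ 3 * vinf / 2 ∧ v ≠ vinf})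
      = vinf / (6 * Real.log (3 / 2) - 2) ∧
    ∀ v : ℝ, vinf / 2 ≤ v → v ≤ 3 * vinf / 2 →
      |v - vinf| ^ 2 ≤ vinf * relEnt vinf v / (6 * Real.log (3 / 2) - 2) := by
  have hc : 6 * log (3 / 2) - 2 = 4 * klFun (3 / 2) := by rw [klFun_apply]; ring
  have hcpos : 0 < 4 * klFun (3 / 2) := mul_pos four_pos (klFun_pos (by norm_num) (by norm_num))
  rw [hc]
  refine ⟨IsGreatest.csSup_eq ⟨⟨3 * vinf / 2, ⟨by linarith, le_rfl, by linarith⟩, ?_⟩, ?_⟩,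
    fun v hv₀ hv => (le_div_iff₀ hcpos).2 (sq_abs_sub_mul_le_mul_relEnt hvinf (by linarith) hv)⟩
  · have hmax : relEnt vinf (3 * vinf / 2) = vinf * klFun (3 / 2) := by
      rw [relEnt_eq_mul_klFun hvinf.ne']; field_simp
    have habs : |3 * vinf / 2 - vinf| = vinf / 2 := by rw [abs_of_pos (by linarith)]; ring
    simp only [hmax, habs]
    field_simp
    ring
  · rintro _ ⟨v, ⟨hv₀, hv, hne⟩, rfl⟩
    rw [div_le_div_iff₀ (relEnt_pos hvinf (by linarith) hne) hcpos]
    exact sq_abs_sub_mul_le_mul_relEnt hvinf (by linarith) hv
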